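/- The 15-point set in PG(2,16) given by the columns (1:0:0), (0:1:0), (0:0:1), (1:1:1), (1:0:11), (1:1:8), (1:2:5), (1:2:10), (1:4:10), (1:9:2), (1:9:8), (1:11:2), (1:11:11), (1:13:1), (1:13:12) — where field elements are powers of a primitive root α satisfying α^4 + α^3 + 1 = 0 (with i denoting α^{i-1} for i ≥ 1) — is a (15,3)-arc, i.e., no four of these points are collinear. -/

import Mathlib

open Matrix

/-- The 15 column vectors of the matrix in the paper, over a field containing a
root `α` of `x⁴ + x³ + 1`; the paper's symbol `i ≥ 1` denotes `α^(i-1)`. -/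
def arcVecs (F : Type*) [Field F] (α : F) : List (Fin 3 → F) :=
  [![1, 0, 0], ![0, 1, 0], ![0, 0, 1], ![1, 1, 1],
   ![1, 0, α ^ 10], ![1, 1, α ^ 7], ![1, α, α ^ 4], ![1, α, α ^ 9],
   ![1, α ^ 3, α ^ 9], ![1, α ^ 8, α], ![1, α ^ 8, α ^ 7], ![1, α ^ 10, α],
   ![1, α ^ 10, α ^ 10], ![1, α ^ 12, 1], ![1, α ^ 12, α ^ 11]]

/-- The 15-point set of the paper, as a set of homogeneous coordinate vectors. -/
def arcSet (F : Type*) [Field F] (α : F) : Set (Fin 3 → F) :=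
  {v | v ∈ arcVecs F α}

/-- A set of (coordinate vectors of) projective points lies on a common line iff
some nonzero linear form vanishes on all of them. -/
def OnCommonLine {F : Type*} [Field F] (s : Set (Fin 3 → F)) : Prop :=
  ∃ f : Fin 3 → F, f ≠ 0 ∧ ∀ v ∈ s, v ⬝ᵥ f = 0

/-!
In the concrete model `GF16 = 𝔽₂[x]/(x⁴ + x³ + 1)` the 15 points and the determinants of their
triples are computable, and a finite check shows that any four of the points contain a triple
with nonzero determinant. Since `|F| = 16` forces characteristic 2, evaluation at `α` is a ring
homomorphism from the model to `F`; it is injective because every nonzero element of the model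
is a power of `x` while `α ≠ 0`. So it carries these nonzero determinants to nonzero
determinants in `F`, and three points with nonzero determinant lie on no common line.
-/

theorem OnCommonLine.mono {F : Type*} [Field F] {s t : Set (Fin 3 → F)} (h : OnCommonLine s)
    (hts : t ⊆ s) : OnCommonLine t :=
  let ⟨f, hf, hs⟩ := h
  ⟨f, hf, fun v hv => hs v (hts hv)⟩

theorem OnCommonLine.det_eq_zero {F : Type*} [Field F] {s : Set (Fin 3 → F)}
    (h : OnCommonLine s) {u v w : Fin 3 → F} (hu : u ∈ s) (hv : v ∈ s) (hw : w ∈ s) :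
    (of ![u, v, w]).det = 0 := by
  obtain ⟨f, hf, hs⟩ := h
  refine exists_mulVec_eq_zero_iff.mp ⟨f, hf, ?_⟩
  ext i
  fin_cases i
  exacts [hs u hu, hs v hv, hs w hw]

theorem exists_lt_lt_lt_of_ncard_eq_four {ι β : Type*} [LinearOrder ι] {f : ι → β}
    (hf : f.Injective) {s : Set β} (hs : s ⊆ Set.range f) (h4 : s.ncard = 4) :
    ∃ i j k l, i < j ∧ j < k ∧ k < l ∧ {f i, f j, f k, f l} ⊆ s := by
  have hT : (f ⁻¹' s).ncard = 4 := by
    rw [Set.ncard_preimage_of_injective_subset_range hf hs, h4]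
  have hfin : (f ⁻¹' s).Finite := Set.finite_of_ncard_ne_zero (by omega)
  rw [Set.ncard_eq_toFinset_card _ hfin] at hT
  set e := hfin.toFinset.orderEmbOfFin hT
  have he (m : Fin 4) : f (e m) ∈ s := hfin.mem_toFinset.mp (hfin.toFinset.orderEmbOfFin_mem hT m)
  refine ⟨e 0, e 1, e 2, e 3, e.strictMono (by decide), e.strictMono (by decide),
    e.strictMono (by decide), ?_⟩
  simp only [Set.insert_subset_iff, Set.singleton_subset_iff]
  exact ⟨he 0, he 1, he 2, he 3⟩

theorem Bool.cast_toNat_and {R : Type*} [Semiring R] (a b : Bool) :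
    ((a && b).toNat : R) = a.toNat * b.toNat := by
  cases a <;> cases b <;> simp

theorem Bool.cast_toNat_xor {R : Type*} [Semiring R] [CharP R 2] (a b : Bool) :
    ((xor a b).toNat : R) = a.toNat + b.toNat := by
  cases a <;> cases b <;> simp [CharTwo.add_self_eq_zero]

/-- `c₀ + c₁ x + c₂ x² + c₃ x³ ∈ 𝔽₂[x]/(x⁴ + x³ + 1)` is stored as `(c₀, c₁, c₂, c₃)`. -/
def GF16 : Type := Bool × Bool × Bool × Bool

namespace GF16

instance : DecidableEq GF16 := inferInstanceAs (DecidableEq (Bool × Bool × Bool × Bool))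

instance : Fintype GF16 := inferInstanceAs (Fintype (Bool × Bool × Bool × Bool))

instance : Zero GF16 := ⟨(false, false, false, false)⟩

instance : One GF16 := ⟨(true, false, false, false)⟩

def add (a b : GF16) : GF16 :=
  (xor a.1 b.1, xor a.2.1 b.2.1, xor a.2.2.1 b.2.2.1, xor a.2.2.2 b.2.2.2)

/-- The product of the coefficient vectors is `c₀ + ⋯ + c₆ x⁶`, reduced with `x⁴ = x³ + 1`,
`x⁵ = x³ + x + 1`, `x⁶ = x³ + x² + x + 1`. -/
def mul (a b : GF16) : GF16 :=
  let (a₀, a₁, a₂, a₃) := a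
  let (b₀, b₁, b₂, b₃) := b
  let c₀ := a₀ && b₀
  let c₁ := xor (a₀ && b₁) (a₁ && b₀)
  let c₂ := xor (a₀ && b₂) (xor (a₁ && b₁) (a₂ && b₀))
  let c₃ := xor (a₀ && b₃) (xor (a₁ && b₂) (xor (a₂ && b₁) (a₃ && b₀)))
  let c₄ := xor (a₁ && b₃) (xor (a₂ && b₂) (a₃ && b₁))
  let c₅ := xor (a₂ && b₃) (a₃ && b₂)
  let c₆ := a₃ && b₃
  (xor c₀ (xor c₄ (xor c₅ c₆)), xor c₁ (xor c₅ c₆), xor c₂ c₆, xor c₃ (xor c₄ (xor c₅ c₆)))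

instance : Add GF16 := ⟨add⟩

instance : Mul GF16 := ⟨mul⟩

instance : Pow GF16 ℕ := ⟨fun a n => npowRec n a⟩

def X : GF16 := (false, true, false, false)

theorem exists_eq_X_pow_of_ne_zero : ∀ a : GF16, a ≠ 0 → ∃ k : Fin 15, a = X ^ (k : ℕ) := by
  decide

theorem eq_of_add_eq_zero : ∀ a b : GF16, a + b = 0 → a = b := by
  decide

def det3 (M : Matrix (Fin 3) (Fin 3) GF16) : GF16 :=
  M 0 0 * M 1 1 * M 2 2 + M 0 0 * M 1 2 * M 2 1 + M 0 1 * M 1 0 * M 2 2 +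
    M 0 1 * M 1 2 * M 2 0 + M 0 2 * M 1 0 * M 2 1 + M 0 2 * M 1 1 * M 2 0

def arcPoints : Fin 15 → Fin 3 → GF16 :=
  ![![1, 0, 0], ![0, 1, 0], ![0, 0, 1], ![1, 1, 1],
    ![1, 0, X ^ 10], ![1, 1, X ^ 7], ![1, X, X ^ 4], ![1, X, X ^ 9],
    ![1, X ^ 3, X ^ 9], ![1, X ^ 8, X], ![1, X ^ 8, X ^ 7], ![1, X ^ 10, X],
    ![1, X ^ 10, X ^ 10], ![1, X ^ 12, 1], ![1, X ^ 12, X ^ 11]]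

theorem arcPoints_injective : Function.Injective arcPoints := by
  unfold Function.Injective
  decide

theorem arcPoints_no_four_collinear (i j k l : Fin 15) (hij : i < j) (hjk : j < k)
    (hkl : k < l) :
    det3 (of ![arcPoints i, arcPoints j, arcPoints k]) ≠ 0 ∨
      det3 (of ![arcPoints i, arcPoints j, arcPoints l]) ≠ 0 ∨
      det3 (of ![arcPoints i, arcPoints k, arcPoints l]) ≠ 0 ∨
      det3 (of ![arcPoints j, arcPoints k, arcPoints l]) ≠ 0 := by
  revert i j k l
  decide

section Evaluation

variable {F : Type*} [Field F] {α : F}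

def eval (α : F) (a : GF16) : F :=
  a.1.toNat + a.2.1.toNat * α + a.2.2.1.toNat * α ^ 2 + a.2.2.2.toNat * α ^ 3

@[simp] theorem eval_zero : eval α 0 = 0 := by
  show eval α (false, false, false, false) = 0
  simp [eval]

@[simp] theorem eval_one : eval α 1 = 1 := by
  show eval α (true, false, false, false) = 1
  simp [eval]

@[simp] theorem eval_X : eval α X = α := by simp [eval, X]

variable [CharP F 2]

theorem eval_add (a b : GF16) : eval α (a + b) = eval α a + eval α b := by
  show eval α (add a b) = _
  simp only [eval, add, Bool.cast_toNat_xor]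
  ring

variable (hα : α ^ 4 + α ^ 3 + 1 = 0)
include hα

theorem eval_mul (a b : GF16) : eval α (a * b) = eval α a * eval α b := by
  have h4 : α ^ 4 = α ^ 3 + 1 := by
    linear_combination hα - (α ^ 3 + 1) * CharTwo.two_eq_zero (R := F)
  have h5 : α ^ 5 = α ^ 3 + α + 1 := by linear_combination α * h4 + h4
  have h6 : α ^ 6 = α ^ 3 + α ^ 2 + α + 1 := by linear_combination α * h5 + h4
  obtain ⟨a₀, a₁, a₂, a₃⟩ := a
  obtain ⟨b₀, b₁, b₂, b₃⟩ := b
  show eval α (mul _ _) = _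
  simp only [eval, mul, Bool.cast_toNat_xor, Bool.cast_toNat_and]
  linear_combination
    (-(a₁.toNat * b₃.toNat + a₂.toNat * b₂.toNat + a₃.toNat * b₁.toNat : F)) * h4 -
      (a₂.toNat * b₃.toNat + a₃.toNat * b₂.toNat : F) * h5 - (a₃.toNat * b₃.toNat : F) * h6

theorem eval_pow (a : GF16) (n : ℕ) : eval α (a ^ n) = eval α a ^ n := by
  induction n with
  | zero => exact (eval_one (α := α)).trans (pow_zero _).symm
  | succ n ih => rw [pow_succ (eval α a), ← ih, ← eval_mul hα]; rfl

theorem eval_ne_zero {a : GF16} (ha : a ≠ 0) : eval α a ≠ 0 := by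
  obtain ⟨k, rfl⟩ := exists_eq_X_pow_of_ne_zero a ha
  rw [eval_pow hα, eval_X]
  exact pow_ne_zero _ (by rintro rfl; norm_num at hα)

theorem eval_injective : Function.Injective (eval α : GF16 → F) := fun a b h =>
  by_contra fun hab => eval_ne_zero hα (mt (eq_of_add_eq_zero a b) hab)
    (by rw [eval_add, h, CharTwo.add_self_eq_zero])

theorem det_map_eval (M : Matrix (Fin 3) (Fin 3) GF16) :
    (M.map (eval α)).det = eval α (det3 M) := by
  simp only [det_fin_three, map_apply, det3, eval_add, eval_mul hα, CharTwo.sub_eq_add]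

theorem arcVecs_eq_ofFn : arcVecs F α = List.ofFn fun t => eval α ∘ arcPoints t := by
  simp only [arcVecs, List.ofFn_succ, List.ofFn_zero, List.cons.injEq, and_true]
  refine ⟨?_, ?_, ?_, ?_, ?_, ?_, ?_, ?_, ?_, ?_, ?_, ?_, ?_, ?_, ?_⟩ <;>
    · funext i
      fin_cases i <;> simp [arcPoints, eval_pow hα]

theorem arcSet_eq_range : arcSet F α = Set.range fun t => eval α ∘ arcPoints t :=
  Set.ext fun v => by
    rw [← List.mem_ofFn', ← arcVecs_eq_ofFn hα]
    rfl

theorem det3_eq_zero_of_onCommonLine {s : Set (Fin 3 → F)} (h : OnCommonLine s)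
    {i j k : Fin 15} (hi : eval α ∘ arcPoints i ∈ s) (hj : eval α ∘ arcPoints j ∈ s)
    (hk : eval α ∘ arcPoints k ∈ s) : det3 (of ![arcPoints i, arcPoints j, arcPoints k]) = 0 := by
  apply eval_injective hα
  rw [eval_zero, ← det_map_eval hα]
  convert h.det_eq_zero hi hj hk using 2
  ext a b
  fin_cases a <;> rfl

end Evaluation

end GF16

/-- the 15-point set of the paper is a `(15,3)`-arc in `PG(2,16)`:
it consists of 15 (projectively distinct) points, no four of them collinear. -/
theorem arc15_is_arc3 (F : Type*) [Field F] [Fintype F] (α : F)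
    (hcard : Fintype.card F = 16) (hα : α ^ 4 + α ^ 3 + 1 = 0) :
    (arcSet F α).ncard = 15 ∧
      ∀ s ⊆ arcSet F α, s.ncard = 4 → ¬ OnCommonLine s := by
  have : CharP F 2 := charP_of_card_eq_prime_pow (p := 2) (f := 4) hcard
  have hinj : Function.Injective fun t => GF16.eval α ∘ GF16.arcPoints t := fun s t h =>
    GF16.arcPoints_injective (funext fun i => GF16.eval_injective hα (congrFun h i))
  rw [GF16.arcSet_eq_range hα]
  refine ⟨by rw [Set.ncard_range_of_injective hinj, Nat.card_fin], ?_⟩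
  intro s hs h4 hline
  obtain ⟨i, j, k, l, hij, hjk, hkl, hsub⟩ := exists_lt_lt_lt_of_ncard_eq_four hinj hs h4
  rcases GF16.arcPoints_no_four_collinear i j k l hij hjk hkl with h | h | h | h <;>
    exact h (GF16.det3_eq_zero_of_onCommonLine hα (hline.mono hsub) (by simp) (by simp) (by simp))
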